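/- Let k be a field and q ∈ k nonzero. For every n ∈ ℕ, in the algebra A₁^q the element (X+Y+Z₁)ⁿ − q^{n(n+1)/2} Σ_{i,j ≥ 0, i+2j ≤ n} c^{(n)}_{ij} q^{j + i(i−1)/2 − ni} Xⁱ Z₂ʲ Z₁^{n−i−2j} lies in the left ideal A₁^q·Y generated by Y, where c^{(n)}_{ij} ∈ k denotes the coefficient of xⁱzʲ in the polynomial p_n ∈ k[x,z]. -/

import Mathlib

noncomputable section

variable (k : Type*) [Field k]

/-- The defining relations of the quantum Weyl algebra `A₁^q`, on the free algebra
with generators `0 = X`, `1 = Y`, `2 = Z₁`, `3 = Z₂`: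
`YX = q⁻¹XY + Z₂`, `Z_iY = qⁱYZ_i`, `Z_iX = q^{−i}XZ_i` (i = 1,2), `Z₁Z₂ = Z₂Z₁`. -/
inductive WeylRel (q : kˣ) : FreeAlgebra k (Fin 4) → FreeAlgebra k (Fin 4) → Prop
  | yx : WeylRel q (FreeAlgebra.ι k 1 * FreeAlgebra.ι k 0)
      (((q⁻¹ : kˣ) : k) • (FreeAlgebra.ι k 0 * FreeAlgebra.ι k 1) + FreeAlgebra.ι k 3)
  | z1y : WeylRel q (FreeAlgebra.ι k 2 * FreeAlgebra.ι k 1)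
      ((q : k) • (FreeAlgebra.ι k 1 * FreeAlgebra.ι k 2))
  | z2y : WeylRel q (FreeAlgebra.ι k 3 * FreeAlgebra.ι k 1)
      (((q : k) ^ 2) • (FreeAlgebra.ι k 1 * FreeAlgebra.ι k 3))
  | z1x : WeylRel q (FreeAlgebra.ι k 2 * FreeAlgebra.ι k 0)
      (((q⁻¹ : kˣ) : k) • (FreeAlgebra.ι k 0 * FreeAlgebra.ι k 2))
  | z2x : WeylRel q (FreeAlgebra.ι k 3 * FreeAlgebra.ι k 0)
      ((((q⁻¹ : kˣ) : k) ^ 2) • (FreeAlgebra.ι k 0 * FreeAlgebra.ι k 3))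
  | z1z2 : WeylRel q (FreeAlgebra.ι k 2 * FreeAlgebra.ι k 3)
      (FreeAlgebra.ι k 3 * FreeAlgebra.ι k 2)

/-- The quantum Weyl algebra `A₁^q`. -/
def WeylAlg (q : kˣ) : Type _ := RingQuot (WeylRel k q)

instance (q : kˣ) : Ring (WeylAlg k q) := inferInstanceAs (Ring (RingQuot (WeylRel k q)))
instance (q : kˣ) : Algebra k (WeylAlg k q) := inferInstanceAs (Algebra k (RingQuot (WeylRel k q)))

/-- The generator `X` of `A₁^q`. -/
def Wx (q : kˣ) : WeylAlg k q := RingQuot.mkAlgHom k (WeylRel k q) (FreeAlgebra.ι k 0)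
/-- The generator `Y` of `A₁^q`. -/
def Wy (q : kˣ) : WeylAlg k q := RingQuot.mkAlgHom k (WeylRel k q) (FreeAlgebra.ι k 1)
/-- The generator `Z₁` of `A₁^q`. -/
def Wz1 (q : kˣ) : WeylAlg k q := RingQuot.mkAlgHom k (WeylRel k q) (FreeAlgebra.ι k 2)
/-- The generator `Z₂` of `A₁^q`. -/
def Wz2 (q : kˣ) : WeylAlg k q := RingQuot.mkAlgHom k (WeylRel k q) (FreeAlgebra.ι k 3)

/-- The `k[z]`-linear `q`-derivative in `x` on `k[z][x]`, determined by
`D_q(xⁿ) = [n]_q x^(n−1)`. -/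
def qDeriv2 (q : k) (p : Polynomial (Polynomial k)) : Polynomial (Polynomial k) :=
  p.sum fun n c =>
    Polynomial.C (c * Polynomial.C (∑ i ∈ Finset.range n, q ^ i)) * Polynomial.X ^ (n - 1)

/-- The recursively defined polynomials `p₀ = 1`,
`p_n = x·p_{n−1} + z q^{−2n} D_q(p_{n−1}) + q^{−n} p_{n−1}` in `k[z][x]`
(outer variable `x`, inner variable `z`). -/
def pseq2 (q : kˣ) : ℕ → Polynomial (Polynomial k)
  | 0 => 1
  | n + 1 =>
      Polynomial.X * pseq2 q n +
        Polynomial.C ((((q⁻¹ : kˣ) : k) ^ (2 * (n + 1))) • (Polynomial.X : Polynomial k)) *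
          qDeriv2 k (q : k) (pseq2 q n) +
        Polynomial.C (Polynomial.C (((q⁻¹ : kˣ) : k) ^ (n + 1))) * pseq2 q n

end

/-!
Write `Θₙ` (`normalForm n`) for the `k`-linear map `k[z][x] → A₁^q` sending `xⁱzʲ`
(with `i + 2j ≤ n`) to `q^{w(n,i,j)} Xⁱ Z₂ʲ Z₁^{n-i-2j}`, where
`w(n,i,j) = n(n+1)/2 + j + i(i-1)/2 - ni`. Modulo the left ideal `A₁^q Y`, moving `Y` rightwards
through `Z₂ʲ Z₁ᵐ` lands in the ideal, so only the `Z₂`-term of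
`Y Xⁱ = q⁻ⁱ Xⁱ Y + q^{2-2i} [i]_q Xⁱ⁻¹ Z₂` survives:
`(X + Y + Z₁) Xⁱ Z₂ʲ Z₁ᵐ ≡ Xⁱ⁺¹ Z₂ʲ Z₁ᵐ + q^{2-2i} [i]_q Xⁱ⁻¹ Z₂ʲ⁺¹ Z₁ᵐ + q⁻ⁱ Xⁱ Z₂ʲ Z₁ᵐ⁺¹`.
The weights `w` make these three terms exactly `Θₙ₊₁` of the three terms of
`x p + z q^{-2(n+1)} D_q p + q^{-(n+1)} p` at `p = xⁱzʲ`. Hence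
`(X + Y + Z₁) Θₙ(pₙ) ≡ Θₙ₊₁(pₙ₊₁)`, and `(X + Y + Z₁)ⁿ ≡ Θₙ(pₙ)` follows by induction on `n`.
-/

theorem mul_pow_eq_smul_pow_mul {R A : Type*} [CommSemiring R] [Semiring A] [Algebra R A]
    {a b : A} {c : R} (h : a * b = c • (b * a)) (i : ℕ) : a * b ^ i = c ^ i • (b ^ i * a) := by
  induction i with
  | zero => simp
  | succ i ih =>
    rw [pow_succ, ← mul_assoc, ih, smul_mul_assoc, mul_assoc, h, mul_smul_comm, smul_smul,
      pow_succ, ← mul_assoc]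

theorem SModEq.smul_algebra {R A : Type*} [CommSemiring R] [Ring A] [Algebra R A]
    {I : Ideal A} {x y : A} (h : x ≡ y [SMOD I]) (c : R) : c • x ≡ c • y [SMOD I] := by
  simpa only [algebraMap_smul] using h.smul (algebraMap R A c)

theorem Nat.cast_choose_two_succ (m : ℕ) : (((m + 1).choose 2 : ℕ) : ℤ) = m.choose 2 + m := by
  rw [Nat.choose_succ_succ' m 1, Nat.choose_one_right]
  push_cast
  ring

namespace WeylAlg

open Polynomial

variable {k : Type*} [Field k] (q : kˣ)

theorem y_mul_x : Wy k q * Wx k q = (q : k)⁻¹ • (Wx k q * Wy k q) + Wz2 k q := by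
  have h := RingQuot.mkAlgHom_rel k (WeylRel.yx (q := q))
  simp only [map_mul, map_add, map_smul, Units.val_inv_eq_inv_val] at h
  exact h

theorem z1_mul_x : Wz1 k q * Wx k q = (q : k)⁻¹ • (Wx k q * Wz1 k q) := by
  have h := RingQuot.mkAlgHom_rel k (WeylRel.z1x (q := q))
  simp only [map_mul, map_smul, Units.val_inv_eq_inv_val] at h
  exact h

theorem z2_mul_x : Wz2 k q * Wx k q = (q : k)⁻¹ ^ 2 • (Wx k q * Wz2 k q) := by
  have h := RingQuot.mkAlgHom_rel k (WeylRel.z2x (q := q))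
  simp only [map_mul, map_smul, Units.val_inv_eq_inv_val] at h
  exact h

theorem commute_z1_z2 : Commute (Wz1 k q) (Wz2 k q) := by
  have h := RingQuot.mkAlgHom_rel k (WeylRel.z1z2 (q := q))
  simp only [map_mul] at h
  exact h

theorem y_mul_z1 : Wy k q * Wz1 k q = (q : k)⁻¹ • (Wz1 k q * Wy k q) := by
  have h := RingQuot.mkAlgHom_rel k (WeylRel.z1y (q := q))
  simp only [map_mul, map_smul] at h
  change Wz1 k q * Wy k q = (q : k) • (Wy k q * Wz1 k q) at h
  rw [h, smul_smul, inv_mul_cancel₀ q.ne_zero, one_smul]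

theorem y_mul_z2 : Wy k q * Wz2 k q = (q : k)⁻¹ ^ 2 • (Wz2 k q * Wy k q) := by
  have h := RingQuot.mkAlgHom_rel k (WeylRel.z2y (q := q))
  simp only [map_mul, map_smul] at h
  change Wz2 k q * Wy k q = (q : k) ^ 2 • (Wy k q * Wz2 k q) at h
  rw [h, smul_smul, ← mul_pow, inv_mul_cancel₀ q.ne_zero, one_pow, one_smul]

def yxCoeff (i : ℕ) : k :=
  (q : k) ^ 2 * (q : k)⁻¹ ^ (2 * i) * ∑ s ∈ Finset.range i, (q : k) ^ s

theorem yxCoeff_succ_succ (i : ℕ) :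
    yxCoeff q (i + 2) = (q : k)⁻¹ * yxCoeff q (i + 1) + (q : k)⁻¹ ^ (2 * (i + 1)) := by
  have hq := q.ne_zero
  rw [yxCoeff, yxCoeff, Finset.sum_range_succ' _ (i + 1)]
  simp only [pow_succ, ← Finset.sum_mul, pow_zero, inv_pow]
  field_simp
  ring

theorem y_mul_x_pow_succ (i : ℕ) :
    Wy k q * Wx k q ^ (i + 1) = (q : k)⁻¹ ^ (i + 1) • (Wx k q ^ (i + 1) * Wy k q) +
      yxCoeff q (i + 1) • (Wx k q ^ i * Wz2 k q) := by
  induction i with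
  | zero => simp [yxCoeff, y_mul_x]
  | succ i ih =>
    rw [pow_succ', ← mul_assoc, y_mul_x, add_mul, smul_mul_assoc, mul_assoc, ih,
      mul_pow_eq_smul_pow_mul (z2_mul_x q), yxCoeff_succ_succ]
    simp only [mul_add, mul_smul_comm, ← mul_assoc, ← pow_succ', smul_add, smul_smul, ← pow_mul,
      add_smul]
    rw [add_assoc]

theorem y_mul_x_pow (i : ℕ) :
    Wy k q * Wx k q ^ i = (q : k)⁻¹ ^ i • (Wx k q ^ i * Wy k q) +
      yxCoeff q i • (Wx k q ^ (i - 1) * Wz2 k q) := by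
  cases i with
  | zero => simp [yxCoeff]
  | succ i => exact y_mul_x_pow_succ q i

theorem y_mul_z2_pow_mul_z1_pow_mem (j m : ℕ) :
    Wy k q * (Wz2 k q ^ j * Wz1 k q ^ m) ∈ Ideal.span {Wy k q} := by
  rw [← mul_assoc, mul_pow_eq_smul_pow_mul (y_mul_z2 q), smul_mul_assoc, mul_assoc,
    mul_pow_eq_smul_pow_mul (y_mul_z1 q), mul_smul_comm, ← mul_assoc]
  exact Submodule.smul_of_tower_mem _ _
    (Submodule.smul_of_tower_mem _ _ (Ideal.mul_mem_left _ _ (Ideal.mem_span_singleton_self _)))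

theorem y_mul_monomial_smodEq (i j m : ℕ) :
    Wy k q * (Wx k q ^ i * Wz2 k q ^ j * Wz1 k q ^ m) ≡
      yxCoeff q i • (Wx k q ^ (i - 1) * Wz2 k q ^ (j + 1) * Wz1 k q ^ m)
      [SMOD Ideal.span {Wy k q}] := by
  have h : Wy k q * (Wx k q ^ i * Wz2 k q ^ j * Wz1 k q ^ m) =
      (q : k)⁻¹ ^ i • (Wx k q ^ i * (Wy k q * (Wz2 k q ^ j * Wz1 k q ^ m))) +
        yxCoeff q i • (Wx k q ^ (i - 1) * Wz2 k q ^ (j + 1) * Wz1 k q ^ m) := by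
    rw [mul_assoc, ← mul_assoc, y_mul_x_pow, add_mul, smul_mul_assoc, smul_mul_assoc, pow_succ']
    simp only [mul_assoc]
  rw [SModEq.sub_mem, h, add_sub_cancel_right]
  exact Submodule.smul_of_tower_mem _ _
    (Ideal.mul_mem_left _ _ (y_mul_z2_pow_mul_z1_pow_mem q j m))

theorem mul_monomial_smodEq (i j m : ℕ) :
    (Wx k q + Wy k q + Wz1 k q) * (Wx k q ^ i * Wz2 k q ^ j * Wz1 k q ^ m) ≡
      Wx k q ^ (i + 1) * Wz2 k q ^ j * Wz1 k q ^ m +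
        yxCoeff q i • (Wx k q ^ (i - 1) * Wz2 k q ^ (j + 1) * Wz1 k q ^ m) +
        (q : k)⁻¹ ^ i • (Wx k q ^ i * Wz2 k q ^ j * Wz1 k q ^ (m + 1))
      [SMOD Ideal.span {Wy k q}] := by
  have hx : Wx k q * (Wx k q ^ i * Wz2 k q ^ j * Wz1 k q ^ m) =
      Wx k q ^ (i + 1) * Wz2 k q ^ j * Wz1 k q ^ m := by
    rw [← mul_assoc, ← mul_assoc, ← pow_succ']
  have hz : Wz1 k q * (Wx k q ^ i * Wz2 k q ^ j * Wz1 k q ^ m) =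
      (q : k)⁻¹ ^ i • (Wx k q ^ i * Wz2 k q ^ j * Wz1 k q ^ (m + 1)) := by
    rw [mul_assoc, ← mul_assoc, mul_pow_eq_smul_pow_mul (z1_mul_x q), smul_mul_assoc,
      mul_assoc, ← mul_assoc (Wz1 k q), ((commute_z1_z2 q).pow_right j).eq, mul_assoc,
      ← pow_succ', ← mul_assoc]
  rw [add_mul, add_mul, hx, hz]
  exact (SModEq.rfl.add (y_mul_monomial_smodEq q i j m)).add SModEq.rfl

theorem qDeriv2_add (a : k) (p r : k[X][X]) :
    qDeriv2 k a (p + r) = qDeriv2 k a p + qDeriv2 k a r :=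
  Polynomial.sum_add_index p r _ (fun _ => by simp) fun _ _ _ => by
    rw [add_mul, map_add, add_mul]

theorem qDeriv2_smul (a c : k) (p : k[X][X]) : qDeriv2 k a (c • p) = c • qDeriv2 k a p := by
  rw [qDeriv2, qDeriv2, Polynomial.sum_smul_index' _ _ _ (fun _ => by simp), Polynomial.smul_sum]
  simp only [← smul_mul_assoc, smul_C]

theorem qDeriv2_monomial (a : k) (i : ℕ) (g : k[X]) :
    qDeriv2 k a (monomial i g) = monomial (i - 1) (g * C (∑ s ∈ Finset.range i, a ^ s)) := by
  rw [qDeriv2, Polynomial.sum_monomial_index _ _ (by simp), C_mul_X_pow_eq_monomial]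

noncomputable def pseqStep (n : ℕ) : k[X][X] →ₗ[k] k[X][X] where
  toFun p := X * p + C ((((q⁻¹ : kˣ) : k) ^ (2 * (n + 1))) • (X : k[X])) * qDeriv2 k (q : k) p +
    C (C (((q⁻¹ : kˣ) : k) ^ (n + 1))) * p
  map_add' p r := by rw [qDeriv2_add]; ring
  map_smul' c p := by simp only [qDeriv2_smul, mul_smul_comm, smul_add, RingHom.id_apply]

theorem pseq2_zero : pseq2 k q 0 = monomial 0 (monomial 0 1) := by
  simp only [monomial_zero_left, map_one]
  rfl

theorem pseq2_succ (n : ℕ) : pseq2 k q (n + 1) = pseqStep q n (pseq2 k q n) := rfl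

theorem pseqStep_monomial (n i j : ℕ) (c : k) :
    pseqStep q n (monomial i (monomial j c)) =
      monomial (i + 1) (monomial j c) +
        monomial (i - 1) (monomial (j + 1)
          ((q : k)⁻¹ ^ (2 * (n + 1)) * (c * ∑ s ∈ Finset.range i, (q : k) ^ s))) +
        monomial i (monomial j ((q : k)⁻¹ ^ (n + 1) * c)) := by
  rw [pseqStep, LinearMap.coe_mk, AddHom.coe_mk, qDeriv2_monomial, X_mul_monomial,
    C_mul_monomial, C_mul_monomial, monomial_mul_C, smul_mul_assoc, X_mul_monomial,
    smul_monomial, smul_eq_mul, C_mul_monomial, Units.val_inv_eq_inv_val]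

/-- `normalForm n` below is only meaningful on this subspace: outside it the exponent
`n - i - 2 * j` of `Z₁` is truncated. -/
noncomputable def weightedDegreeLE (n : ℕ) : Submodule k k[X][X] :=
  Submodule.span k {p | ∃ i j c, i + 2 * j ≤ n ∧ monomial i (monomial j c) = p}

theorem monomial_mem_weightedDegreeLE {n i j : ℕ} (h : i + 2 * j ≤ n) (c : k) :
    monomial i (monomial j c) ∈ weightedDegreeLE (k := k) n :=
  Submodule.subset_span ⟨i, j, c, h, rfl⟩

theorem pseqStep_mem_weightedDegreeLE {n : ℕ} {p : k[X][X]} (hp : p ∈ weightedDegreeLE n) :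
    pseqStep q n p ∈ weightedDegreeLE (n + 1) := by
  suffices weightedDegreeLE n ≤ (weightedDegreeLE (n + 1)).comap (pseqStep q n) from this hp
  rw [weightedDegreeLE, Submodule.span_le]
  rintro _ ⟨i, j, c, h, rfl⟩
  rw [SetLike.mem_coe, Submodule.mem_comap, pseqStep_monomial]
  refine add_mem (add_mem (monomial_mem_weightedDegreeLE (by omega) _) ?_)
    (monomial_mem_weightedDegreeLE (by omega) _)
  cases i with
  | zero => simp
  | succ i => exact monomial_mem_weightedDegreeLE (by omega) _

theorem pseq2_mem_weightedDegreeLE (n : ℕ) : pseq2 k q n ∈ weightedDegreeLE n := by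
  induction n with
  | zero =>
    exact pseq2_zero q ▸ monomial_mem_weightedDegreeLE (show 0 + 2 * 0 ≤ 0 from le_rfl) 1
  | succ n ih => exact pseqStep_mem_weightedDegreeLE q ih

def normalIndices (n : ℕ) : Finset (ℕ × ℕ) :=
  (Finset.range (n + 1) ×ˢ Finset.range (n + 1)).filter (fun p => p.1 + 2 * p.2 ≤ n)

def normalWeight (n i j : ℕ) : ℤ := (n + 1).choose 2 + j + i.choose 2 - n * i

theorem normalWeight_eq (n i j : ℕ) :
    normalWeight n i j =
      ((n * (n + 1) / 2 : ℕ) : ℤ) + ((j : ℤ) + ((i * (i - 1) / 2 : ℕ) : ℤ) - n * i) := by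
  rw [normalWeight, Nat.choose_two_right, Nat.choose_two_right, Nat.add_sub_cancel, mul_comm n]
  ring

theorem normalWeight_succ_succ (n i j : ℕ) :
    normalWeight (n + 1) (i + 1) j = normalWeight n i j := by
  simp only [normalWeight, Nat.cast_choose_two_succ]
  push_cast
  ring

theorem normalWeight_succ_left (n i j : ℕ) :
    normalWeight (n + 1) i j = normalWeight n i j + (n + 1 - i) := by
  simp only [normalWeight, Nat.cast_choose_two_succ]
  push_cast
  ring

theorem normalWeight_succ_right (n i j : ℕ) :
    normalWeight (n + 1) i (j + 1) = normalWeight n (i + 1) j + (2 * n + 2 - 2 * i) := by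
  simp only [normalWeight, Nat.cast_choose_two_succ]
  push_cast
  ring

noncomputable def normalForm (n : ℕ) : k[X][X] →ₗ[k] WeylAlg k q where
  toFun p := ∑ ij ∈ normalIndices n,
    ((p.coeff ij.1).coeff ij.2 * (q : k) ^ normalWeight n ij.1 ij.2) •
      (Wx k q ^ ij.1 * Wz2 k q ^ ij.2 * Wz1 k q ^ (n - ij.1 - 2 * ij.2))
  map_add' p r := by simp only [coeff_add, add_mul, add_smul, Finset.sum_add_distrib]
  map_smul' c p := by
    simp only [coeff_smul, smul_eq_mul, mul_assoc, ← smul_smul, Finset.smul_sum, RingHom.id_apply]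

theorem normalForm_eq_smul_sum (n : ℕ) (p : k[X][X]) :
    normalForm q n p = (q : k) ^ (n * (n + 1) / 2) •
      ∑ ij ∈ normalIndices n, ((p.coeff ij.1).coeff ij.2 *
          ((q ^ ((ij.2 : ℤ) + ((ij.1 * (ij.1 - 1) / 2 : ℕ) : ℤ) - n * ij.1) : kˣ) : k)) •
        (Wx k q ^ ij.1 * Wz2 k q ^ ij.2 * Wz1 k q ^ (n - ij.1 - 2 * ij.2)) := by
  rw [normalForm, LinearMap.coe_mk, AddHom.coe_mk, Finset.smul_sum]
  refine Finset.sum_congr rfl fun ij _ => ?_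
  rw [smul_smul, normalWeight_eq, zpow_add₀ q.ne_zero, zpow_natCast, Units.val_zpow_eq_zpow_val,
    mul_left_comm]

theorem normalForm_monomial {n i j : ℕ} (h : i + 2 * j ≤ n) (c : k) :
    normalForm q n (monomial i (monomial j c)) =
      (c * (q : k) ^ normalWeight n i j) •
        (Wx k q ^ i * Wz2 k q ^ j * Wz1 k q ^ (n - i - 2 * j)) := by
  rw [normalForm, LinearMap.coe_mk, AddHom.coe_mk, Finset.sum_eq_single (i, j)]
  · simp
  · rintro ⟨a, b⟩ _ hne
    obtain rfl | hia := eq_or_ne i a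
    · simp [coeff_monomial, Ne.symm (show b ≠ j by simpa using hne)]
    · simp [coeff_monomial, hia]
  · intro hnot
    exact absurd (by simp [normalIndices]; omega) hnot

theorem normalForm_pseqStep_monomial {n i j : ℕ} (h : i + 2 * j ≤ n) (c : k) :
    normalForm q (n + 1) (pseqStep q n (monomial i (monomial j c))) =
      (c * (q : k) ^ normalWeight n i j) •
        (Wx k q ^ (i + 1) * Wz2 k q ^ j * Wz1 k q ^ (n - i - 2 * j) +
          yxCoeff q i • (Wx k q ^ (i - 1) * Wz2 k q ^ (j + 1) * Wz1 k q ^ (n - i - 2 * j)) +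
          (q : k)⁻¹ ^ i • (Wx k q ^ i * Wz2 k q ^ j * Wz1 k q ^ (n - i - 2 * j + 1))) := by
  have hq := q.ne_zero
  rw [pseqStep_monomial, map_add, map_add, smul_add, smul_add, smul_smul, smul_smul]
  congr 1
  congr 1
  · rw [normalForm_monomial q (by omega), normalWeight_succ_succ,
      show n + 1 - (i + 1) - 2 * j = n - i - 2 * j by omega]
  · cases i with
    | zero => simp [yxCoeff]
    | succ i =>
      rw [normalForm_monomial q (by omega), normalWeight_succ_right, Nat.add_sub_cancel,
        show n + 1 - i - 2 * (j + 1) = n - (i + 1) - 2 * j by omega]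
      congr 1
      have hpow : (q : k)⁻¹ ^ (2 * (n + 1)) *
            (q : k) ^ (normalWeight n (i + 1) j + (2 * n + 2 - 2 * i)) =
          (q : k) ^ normalWeight n (i + 1) j * ((q : k) ^ 2 * (q : k)⁻¹ ^ (2 * (i + 1))) := by
        simp only [← zpow_natCast, inv_zpow', ← zpow_add₀ hq]
        congr 1
        push_cast
        ring
      rw [yxCoeff]
      linear_combination c * (∑ s ∈ Finset.range (i + 1), (q : k) ^ s) * hpow
  · rw [normalForm_monomial q (by omega), normalWeight_succ_left,
      show n + 1 - i - 2 * j = n - i - 2 * j + 1 by omega]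
    congr 1
    have hpow : (q : k)⁻¹ ^ (n + 1) * (q : k) ^ (normalWeight n i j + (n + 1 - i)) =
        (q : k) ^ normalWeight n i j * (q : k)⁻¹ ^ i := by
      simp only [← zpow_natCast, inv_zpow', ← zpow_add₀ hq]
      congr 1
      push_cast
      ring
    linear_combination c * hpow

theorem mul_normalForm_monomial_smodEq {n i j : ℕ} (h : i + 2 * j ≤ n) (c : k) :
    (Wx k q + Wy k q + Wz1 k q) * normalForm q n (monomial i (monomial j c)) ≡
      normalForm q (n + 1) (pseqStep q n (monomial i (monomial j c)))
      [SMOD Ideal.span {Wy k q}] := by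
  rw [normalForm_monomial q h, mul_smul_comm, normalForm_pseqStep_monomial q h]
  exact (mul_monomial_smodEq q i j _).smul_algebra _

theorem mul_normalForm_smodEq {n : ℕ} {p : k[X][X]} (hp : p ∈ weightedDegreeLE n) :
    (Wx k q + Wy k q + Wz1 k q) * normalForm q n p ≡
      normalForm q (n + 1) (pseqStep q n p) [SMOD Ideal.span {Wy k q}] := by
  let L := LinearMap.mulLeft k (Wx k q + Wy k q + Wz1 k q) ∘ₗ normalForm q n -
    normalForm q (n + 1) ∘ₗ pseqStep q n
  suffices weightedDegreeLE n ≤ ((Ideal.span {Wy k q}).restrictScalars k).comap L from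
    SModEq.sub_mem.mpr (this hp)
  rw [weightedDegreeLE, Submodule.span_le]
  rintro _ ⟨i, j, c, h, rfl⟩
  exact SModEq.sub_mem.mp (mul_normalForm_monomial_smodEq q h c)

theorem pow_smodEq_normalForm_pseq2 (n : ℕ) :
    (Wx k q + Wy k q + Wz1 k q) ^ n ≡ normalForm q n (pseq2 k q n)
      [SMOD Ideal.span {Wy k q}] := by
  induction n with
  | zero =>
    rw [pow_zero, pseq2_zero, normalForm_monomial q (show 0 + 2 * 0 ≤ 0 from le_rfl)]
    simp [normalWeight]
  | succ n ih =>
    rw [pow_succ', pseq2_succ]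
    exact (ih.smul _).trans (mul_normalForm_smodEq q (pseq2_mem_weightedDegreeLE q n))

end WeylAlg

/-- In the quantum Weyl algebra `A₁^q`, the element
`(X+Y+Z₁)ⁿ − q^{n(n+1)/2} Σ_{i+2j ≤ n} c^{(n)}_{ij} q^{j+i(i−1)/2−ni} Xⁱ Z₂ʲ Z₁^{n−i−2j}`
lies in the left ideal generated by `Y`, where `c^{(n)}_{ij}` is the coefficient of
`xⁱzʲ` in the polynomial `p_n`. -/
theorem weyl_power_mod_leftIdeal {k : Type*} [Field k] (q : kˣ) (n : ℕ) :
    (Wx k q + Wy k q + Wz1 k q) ^ n -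
      (q : k) ^ (n * (n + 1) / 2) •
        ∑ p ∈ (Finset.range (n + 1) ×ˢ Finset.range (n + 1)).filter
            (fun p => p.1 + 2 * p.2 ≤ n),
          (((pseq2 k q n).coeff p.1).coeff p.2 *
              ((q ^ ((p.2 : ℤ) + ((p.1 * (p.1 - 1) / 2 : ℕ) : ℤ) - (n : ℤ) * (p.1 : ℤ)) : kˣ) : k)) •
            (Wx k q ^ p.1 * Wz2 k q ^ p.2 * Wz1 k q ^ (n - p.1 - 2 * p.2))
      ∈ Ideal.span {Wy k q} := by
  have h := WeylAlg.pow_smodEq_normalForm_pseq2 q n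
  rw [WeylAlg.normalForm_eq_smul_sum] at h
  exact SModEq.sub_mem.mp h
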